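/- If every negative edge of the prefix graph of a feasible array y joins vertices in distinct connected components of the positive subgraph P⁺, then the regular string x defined by assigning to each connected component C of P⁺ a unique letter λ_C, with x[i] = λ_C for i ∈ C, has prefix table equal to y. -/

import Mathlib

/-! Give every position the connected component of `P⁺` containing it as its letter. A positive
edge `(1 + h, i + h)` with `h < y i` puts both ends in one component, so `x[i..i+y[i]-1]` matches
the prefix; the negative edge `(1 + y i, i + y i)` joins two components, so the match stops there. -/

/-- `x[i..i+ℓ-1]` matches the prefix `x[1..ℓ]` of `x[1..n]` position-wise.  -/
def MatchPref {α : Type*} (x : ℕ → Finset α) (n i ℓ : ℕ) : Prop :=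
  i + ℓ ≤ n + 1 ∧ ∀ h, h < ℓ → ∃ a, a ∈ x (1 + h) ∧ a ∈ x (i + h)

/-- `y` is the prefix table of the (1-indexed) string `x[1..n]`:
for each `i ∈ 1..n`, `y i` is the length of the longest prefix of `x[i..n]`
matching a prefix of `x`. -/
def IsPrefixTable {α : Type*} (x : ℕ → Finset α) (n : ℕ) (y : ℕ → ℕ) : Prop :=
  ∀ i, 1 ≤ i → i ≤ n → MatchPref x n i (y i) ∧ ∀ ℓ, MatchPref x n i ℓ → ℓ ≤ y i

/-- A feasible array `y[1..n]`. -/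
def Feasible (y : ℕ → ℕ) (n : ℕ) : Prop :=
  y 1 = n ∧ ∀ i, 2 ≤ i → i ≤ n → y i ≤ n - i + 1

/-- Positive edges of the prefix graph of `y[1..n]`. -/
def posEdges (y : ℕ → ℕ) (n : ℕ) : Finset (Sym2 ℕ) :=
  (Finset.Icc 2 n).biUnion fun i => (Finset.Icc 1 (y i)).image fun h => s(h, i + h - 1)

/-- Negative edges of the prefix graph of `y[1..n]`. -/
def negEdges (y : ℕ → ℕ) (n : ℕ) : Finset (Sym2 ℕ) :=
  ((Finset.Icc 2 n).filter fun i => i + y i ≤ n).image fun i => s(1 + y i, i + y i)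

/-- The positive subgraph `P⁺` of the prefix graph of `y[1..n]`, as a simple graph. -/
def Pplus (y : ℕ → ℕ) (n : ℕ) : SimpleGraph ℕ where
  Adj a b := a ≠ b ∧ s(a, b) ∈ posEdges y n
  symm := by
    constructor; rintro a b ⟨h1, h2⟩
    exact ⟨h1.symm, by rwa [Sym2.eq_swap]⟩
  loopless := by constructor; rintro a ⟨h1, _⟩; exact h1 rfl

theorem matchPref_singleton_iff {α : Type*} (f : ℕ → α) (n i ℓ : ℕ) :
    MatchPref (fun j => ({f j} : Finset α)) n i ℓ ↔
      i + ℓ ≤ n + 1 ∧ ∀ h < ℓ, f (1 + h) = f (i + h) := by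
  simp [MatchPref]

theorem isPrefixTable_singleton_of_match_of_mismatch {α : Type*} (f : ℕ → α) (n : ℕ) (y : ℕ → ℕ)
    (hposition : ∀ i, 1 ≤ i → i ≤ n → i + y i ≤ n + 1 ∧ (∀ h < y i, f (1 + h) = f (i + h)) ∧
      (i + y i ≤ n → f (1 + y i) ≠ f (i + y i))) :
    IsPrefixTable (fun j => ({f j} : Finset α)) n y := by
  intro i hi hin
  obtain ⟨hlen, hmatch, hmismatch⟩ := hposition i hi hin
  simp only [matchPref_singleton_iff]
  refine ⟨⟨hlen, hmatch⟩, fun ℓ ⟨hℓ, hℓmatch⟩ => ?_⟩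
  by_contra! hlt
  exact hmismatch (by omega) (hℓmatch (y i) hlt)

theorem Pplus_adj_of_lt_y {y : ℕ → ℕ} {n i h : ℕ} (hi : 2 ≤ i) (hin : i ≤ n) (hh : h < y i) :
    (Pplus y n).Adj (1 + h) (i + h) := by
  refine ⟨by omega, ?_⟩
  simp only [posEdges, Finset.mem_biUnion, Finset.mem_image, Finset.mem_Icc]
  exact ⟨i, ⟨hi, hin⟩, h + 1, ⟨by omega, by omega⟩, by rw [Sym2.eq_iff]; omega⟩

/-- If every negative edge of the prefix graph of a feasible array `y` joins vertices in
distinct connected components of `P⁺`, then the regular string assigning to each position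
the (unique letter of the) connected component of `P⁺` containing it has prefix table `y`. -/
theorem componentString_isPrefixTable (n : ℕ) (y : ℕ → ℕ) (hy : Feasible y n)
    (hneg : ∀ i, 2 ≤ i → i ≤ n → i + y i ≤ n →
      ¬ (Pplus y n).Reachable (1 + y i) (i + y i)) :
    IsPrefixTable
      (fun i => ({(Pplus y n).connectedComponentMk i} : Finset (Pplus y n).ConnectedComponent))
      n y := by
  obtain ⟨hy1, hyle⟩ := hy
  refine isPrefixTable_singleton_of_match_of_mismatch _ n y fun i hi hin => ?_
  rcases (by omega : i = 1 ∨ 2 ≤ i) with rfl | hi2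
  · exact ⟨by omega, fun _ _ => rfl, by omega⟩
  · refine ⟨by have := hyle i hi2 hin; omega, fun h hh => ?_, fun hend heq => ?_⟩
    · exact SimpleGraph.ConnectedComponent.sound (Pplus_adj_of_lt_y hi2 hin hh).reachable
    · exact hneg i hi2 hin hend (SimpleGraph.ConnectedComponent.exact heq)
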